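/- Let Γ be a simplicial graph and G = {G_u} a collection of groups. For every element g of the graph product ΓG, any two reduced words representing g have the same length, and the set of vertex groups containing the syllables is the same; hence the length and support of g are well defined. -/

import Mathlib

section

variable {ι : Type*}

/-- The commutation relators defining the graph product inside the free product. -/
def graphProdRels (Γ : SimpleGraph ι) (M : ι → Type*) [∀ i, Group (M i)] :
    Set (Monoid.CoprodI M) :=
  {x | ∃ (i j : ι) (_ : Γ.Adj i j) (g : M i) (h : M j),
    x = Monoid.CoprodI.of g * Monoid.CoprodI.of h *
      (Monoid.CoprodI.of g)⁻¹ * (Monoid.CoprodI.of h)⁻¹}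

/-- The graph product `ΓM`. -/
abbrev GraphProduct (Γ : SimpleGraph ι) (M : ι → Type*) [∀ i, Group (M i)] :=
  Monoid.CoprodI M ⧸ Subgroup.normalClosure (graphProdRels Γ M)

variable (Γ : SimpleGraph ι) (M : ι → Type*) [∀ i, Group (M i)]

/-- The element of the graph product represented by a word (a list of syllables). -/
def evalWord (w : List (Σ i, M i)) : GraphProduct Γ M :=
  (w.map fun s => (QuotientGroup.mk (Monoid.CoprodI.of s.2) : GraphProduct Γ M)).prod

/-- An elementary move on words: cancellation, amalgamation, or shuffling. -/
def WordStep (w w' : List (Σ i, M i)) : Prop :=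
  (∃ (l r : List (Σ i, M i)) (i : ι),
    w = l ++ ⟨i, (1 : M i)⟩ :: r ∧ w' = l ++ r) ∨
  (∃ (l r : List (Σ i, M i)) (i : ι) (g h : M i),
    w = l ++ ⟨i, g⟩ :: ⟨i, h⟩ :: r ∧ w' = l ++ ⟨i, g * h⟩ :: r) ∨
  (∃ (l r : List (Σ i, M i)) (i j : ι) (g : M i) (h : M j), Γ.Adj i j ∧
    w = l ++ ⟨i, g⟩ :: ⟨j, h⟩ :: r ∧ w' = l ++ ⟨j, h⟩ :: ⟨i, g⟩ :: r)

/-- A word is reduced if no sequence of elementary moves shortens it. -/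
def ReducedWord (w : List (Σ i, M i)) : Prop :=
  ∀ w' : List (Σ i, M i), Relation.ReflTransGen (WordStep Γ M) w w' →
    w.length ≤ w'.length

/-- The support of a word: the vertices whose vertex group contains a syllable. -/
def wordSupport (w : List (Σ i, M i)) : Set ι :=
  {i | ∃ g : M i, (⟨i, g⟩ : Σ i, M i) ∈ w}

end

/-!
Two words representing the same element are connected by elementary moves, since words modulo
moves form a monoid through which the graph product factors. Modulo shuffles, cancellation and
amalgamation strictly shorten words, and on shuffle classes they are locally confluent in the
strong sense that two one-step shortenings can be rejoined in at most one step each. The point is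
that shuffles can pull the two syllables of an amalgamation apart; the move must therefore be
taken in the shuffle-stable form `Merge`, amalgamating across syllables that commute with them.
By Church–Rosser, the shuffle classes of two reduced words, being irreducible, coincide, so the
words are permutations of each other.
-/

open Relation

theorem Quot.mk_eq_mk_iff_reflTransGen {α : Type*} {r : α → α → Prop} [Std.Symm r] {a b : α} :
    Quot.mk r a = Quot.mk r b ↔ ReflTransGen r a b := by
  rw [← EqvGen.eqvGen_eq_reflTransGen]
  exact ⟨Quot.eqvGen_exact, Quot.eqvGen_sound⟩

theorem Relation.EqvGen.lift' {α β : Type*} {r : α → α → Prop} {s : β → β → Prop} (f : α → β)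
    (hf : ∀ a b, r a b → EqvGen s (f a) (f b)) {a b : α} (h : EqvGen r a b) :
    EqvGen s (f a) (f b) := by
  induction h with
  | rel _ _ h => exact hf _ _ h
  | refl => exact .refl _
  | symm _ _ _ ih => exact .symm _ _ ih
  | trans _ _ _ _ _ ih₁ ih₂ => exact .trans _ _ _ ih₁ ih₂

theorem Relation.eq_of_eqvGen_of_normal {α : Type*} {r : α → α → Prop}
    (hconf : ∀ a b c, r a b → r a c → Join (ReflGen r) b c) {a b : α} (hab : EqvGen r a b)
    (ha : ∀ c, ¬ r a c) (hb : ∀ c, ¬ r b c) : a = b := by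
  have hcr : ∀ a b c, r a b → r a c → ∃ d, ReflGen r b d ∧ ReflTransGen r c d :=
    fun a b c hb hc => (hconf a b c hb hc).imp fun _ ⟨hb, hc⟩ => ⟨hb, hc.to_reflTransGen⟩
  obtain ⟨d, had, hbd⟩ := (equivalence_join_reflTransGen hcr).eqvGen_iff.mp
    (EqvGen.mono (fun _ c h => ⟨c, .single h, .refl⟩) _ _ hab)
  exact (had.cases_head.resolve_right fun ⟨c, hc, _⟩ => ha c hc).trans
    (hbd.cases_head.resolve_right fun ⟨c, hc, _⟩ => hb c hc).symm

namespace List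

variable {α : Type*}

theorem append_cons_eq_append_cons_cases {l₁ r₁ l₂ r₂ : List α} {s t : α}
    (h : l₁ ++ s :: r₁ = l₂ ++ t :: r₂) :
    (l₁ = l₂ ∧ s = t ∧ r₁ = r₂) ∨ (∃ m, l₂ = l₁ ++ s :: m ∧ r₁ = m ++ t :: r₂) ∨
      ∃ m, l₁ = l₂ ++ t :: m ∧ r₂ = m ++ s :: r₁ := by
  rcases append_eq_append_iff.mp h with ⟨_ | ⟨u, m⟩, rfl, hm⟩ | ⟨_ | ⟨u, m⟩, rfl, hm⟩ <;>
    simp_all [eq_comm]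

theorem append_cons_eq_append_cons_cons_cases {l₁ r₁ l₂ r₂ : List α} {s t u : α}
    (h : l₁ ++ s :: r₁ = l₂ ++ t :: u :: r₂) :
    (l₁ = l₂ ∧ s = t ∧ r₁ = u :: r₂) ∨ (l₁ = l₂ ++ [t] ∧ s = u ∧ r₁ = r₂) ∨
      (∃ m, l₂ = l₁ ++ s :: m ∧ r₁ = m ++ t :: u :: r₂) ∨
      ∃ m, l₁ = l₂ ++ t :: u :: m ∧ r₂ = m ++ s :: r₁ := by
  rcases append_cons_eq_append_cons_cases h with h | h | ⟨_ | ⟨v, m⟩, rfl, hm⟩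
  · exact .inl h
  · exact .inr (.inr (.inl h))
  all_goals simp_all

end List

namespace GraphProduct

variable {ι : Type*} {Γ : SimpleGraph ι} {M : ι → Type*} {x x' y z : List (Σ i, M i)}

section Shuffle

variable (Γ M) in
def Shuffle (x y : List (Σ i, M i)) : Prop :=
  ∃ (l r : List (Σ i, M i)) (i j : ι) (g : M i) (h : M j), Γ.Adj i j ∧
    x = l ++ ⟨i, g⟩ :: ⟨j, h⟩ :: r ∧ y = l ++ ⟨j, h⟩ :: ⟨i, g⟩ :: r

variable (Γ M) in
abbrev ShuffleClass := Quot (Shuffle Γ M)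

instance : Std.Symm (Shuffle Γ M) where
  symm _ _ := fun ⟨l, r, i, j, g, h, hij, hx, hy⟩ => ⟨l, r, j, i, h, g, hij.symm, hy, hx⟩

theorem Shuffle.perm (h : Shuffle Γ M x y) : x.Perm y := by
  obtain ⟨l, r, i, j, g, h, -, rfl, rfl⟩ := h
  exact .append_left l (.swap _ _ _)

theorem perm_of_mk_eq (h : (Quot.mk _ x : ShuffleClass Γ M) = Quot.mk _ y) : x.Perm y :=
  (List.Perm.eqv _).eqvGen_iff.mp
    (EqvGen.mono (fun _ _ => Shuffle.perm) _ _ (Quot.eqvGen_exact h))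

theorem reflTransGen_shuffle_past_commuting {j : ι} (p : M j) {m : List (Σ i, M i)}
    (hm : ∀ t ∈ m, Γ.Adj j t.1) (a w : List (Σ i, M i)) :
    ReflTransGen (Shuffle Γ M) (a ++ ⟨j, p⟩ :: (m ++ w)) (a ++ (m ++ ⟨j, p⟩ :: w)) := by
  induction m generalizing a with
  | nil => rfl
  | cons t m ih =>
    refine .head ⟨a, m ++ w, j, t.1, p, t.2, hm t (by simp), rfl, rfl⟩ ?_
    simpa using ih (fun t ht => hm t (by simp [ht])) (a ++ [t])

end Shuffle

section Monoid

variable [∀ i, Monoid (M i)]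

section Moves

variable (Γ M)

def Cancel (x y : List (Σ i, M i)) : Prop :=
  ∃ (l r : List (Σ i, M i)) (i : ι), x = l ++ ⟨i, (1 : M i)⟩ :: r ∧ y = l ++ r

def Amalgamate (x y : List (Σ i, M i)) : Prop :=
  ∃ (l r : List (Σ i, M i)) (i : ι) (g h : M i),
    x = l ++ ⟨i, g⟩ :: ⟨i, h⟩ :: r ∧ y = l ++ ⟨i, g * h⟩ :: r

def Merge (x y : List (Σ i, M i)) : Prop :=
  ∃ (a m b : List (Σ i, M i)) (j : ι) (p q : M j), (∀ t ∈ m, Γ.Adj j t.1) ∧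
    x = a ++ ⟨j, p⟩ :: (m ++ ⟨j, q⟩ :: b) ∧ y = a ++ (m ++ ⟨j, p * q⟩ :: b)

def Shorten (x y : List (Σ i, M i)) : Prop :=
  Cancel M x y ∨ Merge Γ M x y

def ShuffleClass.Shorten (A B : ShuffleClass Γ M) : Prop :=
  ∃ x y, A = Quot.mk _ x ∧ B = Quot.mk _ y ∧ GraphProduct.Shorten Γ M x y

end Moves

theorem Amalgamate.merge (h : Amalgamate M x y) : Merge Γ M x y := by
  obtain ⟨l, r, i, g, h, rfl, rfl⟩ := h
  exact ⟨l, [], r, i, g, h, by simp, rfl, rfl⟩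

theorem Merge.exists_amalgamate (h : Merge Γ M x y) :
    ∃ x', ReflTransGen (Shuffle Γ M) x x' ∧ Amalgamate M x' y := by
  obtain ⟨a, m, b, j, p, q, hm, rfl, rfl⟩ := h
  exact ⟨a ++ (m ++ ⟨j, p⟩ :: ⟨j, q⟩ :: b), reflTransGen_shuffle_past_commuting p hm a _,
    a ++ m, b, j, p, q, by simp, by simp⟩

theorem Shorten.length_add_one (h : Shorten Γ M x y) : y.length + 1 = x.length := by
  rcases h with ⟨l, r, i, rfl, rfl⟩ | ⟨a, m, b, j, p, q, -, rfl, rfl⟩ <;> simp <;> omega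

theorem Cancel.shuffle (hy : Cancel M x y) (hs : Shuffle Γ M x x') :
    ∃ y', Cancel M x' y' ∧ ReflGen (Shuffle Γ M) y y' := by
  obtain ⟨u, v, k, rfl, rfl⟩ := hy
  obtain ⟨l, r, i, j, g, h, hij, hx, rfl⟩ := hs
  rcases List.append_cons_eq_append_cons_cons_cases hx with
    ⟨rfl, hs, rfl⟩ | ⟨rfl, hs, rfl⟩ | ⟨m, rfl, rfl⟩ | ⟨m, rfl, rfl⟩
  · cases hs
    exact ⟨_, ⟨u ++ [⟨j, h⟩], r, k, by simp, by simp⟩, .refl⟩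
  · cases hs
    exact ⟨_, ⟨l, ⟨i, g⟩ :: v, k, by simp, by simp⟩, .refl⟩
  · exact ⟨_, ⟨u, m ++ ⟨j, h⟩ :: ⟨i, g⟩ :: r, k, by simp, rfl⟩,
      .single ⟨u ++ m, r, i, j, g, h, hij, by simp, by simp⟩⟩
  · exact ⟨_, ⟨l ++ ⟨j, h⟩ :: ⟨i, g⟩ :: m, v, k, by simp, rfl⟩,
      .single ⟨l, m ++ v, i, j, g, h, hij, by simp, by simp⟩⟩

theorem Merge.shuffle (hy : Merge Γ M x y) (hs : Shuffle Γ M x x') :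
    ∃ y', Merge Γ M x' y' ∧ ReflGen (Shuffle Γ M) y y' := by
  obtain ⟨a, m, b, j, p, q, hm, rfl, rfl⟩ := hy
  obtain ⟨l, r, i, k, g, h, hik, hx, rfl⟩ := hs
  rcases List.append_cons_eq_append_cons_cons_cases hx with
    ⟨rfl, hs, hr⟩ | ⟨rfl, hs, rfl⟩ | ⟨m₁, rfl, hr⟩ | ⟨m₁, rfl, rfl⟩
  · cases hs
    rcases m with _ | ⟨t, m⟩
    · cases hr
      exact (Γ.irrefl hik).elim
    · obtain ⟨rfl, rfl⟩ := List.cons.inj hr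
      exact ⟨_, ⟨a ++ [⟨k, h⟩], m, b, j, p, q, fun t ht => hm t (by simp [ht]), by simp,
        by simp⟩, .refl⟩
  · cases hs
    refine ⟨_, ⟨l, ⟨i, g⟩ :: m, b, j, p, q, ?_, by simp, by simp⟩, .refl⟩
    simpa [hik.symm] using hm
  · rcases List.append_cons_eq_append_cons_cons_cases hr with
      ⟨rfl, hs, rfl⟩ | ⟨rfl, hs, rfl⟩ | ⟨m₂, rfl, rfl⟩ | ⟨m₂, rfl, rfl⟩
    · cases hs
      exact ⟨_, ⟨a, m ++ [⟨k, h⟩], r, j, p, q, by simpa [or_imp, forall_and, hik] using hm,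
        by simp, rfl⟩, .single ⟨a ++ m, r, j, k, p * q, h, hik, by simp, by simp⟩⟩
    · cases hs
      exact ⟨_, ⟨a, m₁, ⟨i, g⟩ :: b, j, p, q, fun t ht => hm t (by simp [ht]), by simp, rfl⟩,
        .single ⟨a ++ m₁, b, i, j, g, p * q, hik, by simp, by simp⟩⟩
    · exact ⟨_, ⟨a, m, m₂ ++ ⟨k, h⟩ :: ⟨i, g⟩ :: r, j, p, q, hm, by simp, rfl⟩,
        .single ⟨a ++ m ++ ⟨j, p * q⟩ :: m₂, r, i, k, g, h, hik, by simp, by simp⟩⟩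
    · exact ⟨_, ⟨a, m₁ ++ ⟨k, h⟩ :: ⟨i, g⟩ :: m₂, b, j, p, q,
        fun t ht => hm t (by simp at ht ⊢; tauto), by simp, rfl⟩,
        .single ⟨a ++ m₁, m₂ ++ ⟨j, p * q⟩ :: b, i, k, g, h, hik, by simp, by simp⟩⟩
  · exact ⟨_, ⟨l ++ ⟨k, h⟩ :: ⟨i, g⟩ :: m₁, m, b, j, p, q, hm, by simp, rfl⟩,
      .single ⟨l, m₁ ++ (m ++ ⟨j, p * q⟩ :: b), i, k, g, h, hik, by simp, by simp⟩⟩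

theorem Shorten.shuffle (hy : Shorten Γ M x y) (hs : Shuffle Γ M x x') :
    ∃ y', Shorten Γ M x' y' ∧ ReflGen (Shuffle Γ M) y y' := by
  rcases hy with hy | hy
  · obtain ⟨y', hy', hyy'⟩ := hy.shuffle hs
    exact ⟨y', .inl hy', hyy'⟩
  · obtain ⟨y', hy', hyy'⟩ := hy.shuffle hs
    exact ⟨y', .inr hy', hyy'⟩

theorem Shorten.reflTransGen_shuffle (hy : Shorten Γ M x y)
    (hs : ReflTransGen (Shuffle Γ M) x x') :
    ∃ y', Shorten Γ M x' y' ∧ ReflTransGen (Shuffle Γ M) y y' := by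
  induction hs with
  | refl => exact ⟨y, hy, .refl⟩
  | tail _ hs ih =>
    obtain ⟨y', hy', hyy'⟩ := ih
    obtain ⟨y'', hy'', hy'y''⟩ := hy'.shuffle hs
    exact ⟨y'', hy'', hyy'.trans hy'y''.to_reflTransGen⟩

theorem Cancel.shorten_mk (h : Cancel M x y) :
    ShuffleClass.Shorten Γ M (Quot.mk _ x) (Quot.mk _ y) :=
  ⟨x, y, rfl, rfl, .inl h⟩

theorem Merge.shorten_mk (h : Merge Γ M x y) :
    ShuffleClass.Shorten Γ M (Quot.mk _ x) (Quot.mk _ y) :=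
  ⟨x, y, rfl, rfl, .inr h⟩

theorem Cancel.join_cancel (hy : Cancel M x y) (hz : Cancel M x z) :
    Join (ReflGen (ShuffleClass.Shorten Γ M)) (Quot.mk _ y) (Quot.mk _ z) := by
  obtain ⟨l, r, i, rfl, rfl⟩ := hy
  obtain ⟨l', r', k, hx, rfl⟩ := hz
  rcases List.append_cons_eq_append_cons_cases hx with
    ⟨rfl, -, rfl⟩ | ⟨m, rfl, rfl⟩ | ⟨m, rfl, rfl⟩
  · exact ⟨_, .refl, .refl⟩
  · exact ⟨Quot.mk _ (l ++ (m ++ r')),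
      .single (Cancel.shorten_mk ⟨l ++ m, r', k, by simp, by simp⟩),
      .single (Cancel.shorten_mk ⟨l, m ++ r', i, by simp, by simp⟩)⟩
  · exact ⟨Quot.mk _ (l' ++ (m ++ r)),
      .single (Cancel.shorten_mk ⟨l', m ++ r, k, by simp, by simp⟩),
      .single (Cancel.shorten_mk ⟨l' ++ m, r, i, by simp, by simp⟩)⟩

theorem Cancel.join_merge (hy : Cancel M x y) (hz : Merge Γ M x z) :
    Join (ReflGen (ShuffleClass.Shorten Γ M)) (Quot.mk _ y) (Quot.mk _ z) := by
  obtain ⟨l, r, i, rfl, rfl⟩ := hy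
  obtain ⟨a, m, b, j, p, q, hm, hx, rfl⟩ := hz
  rcases List.append_cons_eq_append_cons_cases hx with
    ⟨rfl, hs, rfl⟩ | ⟨m₁, rfl, rfl⟩ | ⟨m₁, rfl, hr⟩
  · cases hs
    exact ⟨_, .refl, by rw [one_mul]⟩
  · exact ⟨Quot.mk _ (l ++ (m₁ ++ (m ++ ⟨j, p * q⟩ :: b))),
      .single (Merge.shorten_mk ⟨l ++ m₁, m, b, j, p, q, hm, by simp, by simp⟩),
      .single (Cancel.shorten_mk ⟨l, _, i, by simp, rfl⟩)⟩
  rcases List.append_cons_eq_append_cons_cases hr with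
    ⟨rfl, hs, rfl⟩ | ⟨m₂, rfl, rfl⟩ | ⟨m₂, rfl, rfl⟩
  · cases hs
    have hpm : ReflTransGen (Shuffle Γ M) (a ++ ⟨i, p⟩ :: m ++ b) (a ++ (m ++ ⟨i, p⟩ :: b)) := by
      simpa using reflTransGen_shuffle_past_commuting p hm a b
    rw [mul_one, Quot.mk_eq_mk_iff_reflTransGen.mpr hpm]
    exact ⟨_, .refl, .refl⟩
  · exact ⟨Quot.mk _ (a ++ (m ++ ⟨j, p * q⟩ :: (m₂ ++ r))),
      .single (Merge.shorten_mk ⟨a, m, m₂ ++ r, j, p, q, hm, by simp, rfl⟩),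
      .single (Cancel.shorten_mk ⟨a ++ m ++ ⟨j, p * q⟩ :: m₂, r, i, by simp, by simp⟩)⟩
  · exact ⟨Quot.mk _ (a ++ (m₁ ++ m₂ ++ ⟨j, p * q⟩ :: b)),
      .single (Merge.shorten_mk ⟨a, m₁ ++ m₂, b, j, p, q,
        fun t ht => hm t (by simp at ht ⊢; tauto), by simp, rfl⟩),
      .single (Cancel.shorten_mk ⟨a ++ m₁, m₂ ++ ⟨j, p * q⟩ :: b, i, by simp, by simp⟩)⟩

theorem Amalgamate.join_merge (hy : Amalgamate M x y) (hz : Merge Γ M x z) :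
    Join (ReflGen (ShuffleClass.Shorten Γ M)) (Quot.mk _ y) (Quot.mk _ z) := by
  obtain ⟨l, r, i, g, h, rfl, rfl⟩ := hy
  obtain ⟨a, m, b, j, p, q, hm, hx, rfl⟩ := hz
  rcases List.append_cons_eq_append_cons_cons_cases hx.symm with
    ⟨rfl, hs, hr⟩ | ⟨rfl, hs, rfl⟩ | ⟨m₁, rfl, hr⟩ | ⟨m₁, rfl, rfl⟩
  · cases hs
    rcases m with _ | ⟨t, m⟩
    · cases hr
      exact ⟨_, .refl, by simpa using .refl⟩
    · obtain ⟨rfl, rfl⟩ := List.cons.inj hr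
      exact (Γ.irrefl (hm _ (List.mem_cons_self ..))).elim
  · cases hs
    exact ⟨Quot.mk _ (l ++ (m ++ ⟨i, g * h * q⟩ :: b)),
      .single (Merge.shorten_mk ⟨l, m, b, i, g * h, q, hm, by simp, rfl⟩),
      .single (Merge.shorten_mk ⟨l, m, b, i, g, h * q, hm, by simp, by simp [mul_assoc]⟩)⟩
  · rcases List.append_cons_eq_append_cons_cons_cases hr with
      ⟨rfl, hs, rfl⟩ | ⟨rfl, hs, rfl⟩ | ⟨m₂, rfl, rfl⟩ | ⟨m₂, rfl, rfl⟩
    · cases hs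
      exact ⟨Quot.mk _ (a ++ (m ++ ⟨i, p * g * h⟩ :: r)),
        .single (Merge.shorten_mk ⟨a, m, r, i, p, g * h, hm, by simp, by simp [mul_assoc]⟩),
        .single (Merge.shorten_mk ⟨a ++ m, [], r, i, p * g, h, by simp, by simp, by simp⟩)⟩
    · cases hs
      exact (Γ.irrefl (hm ⟨i, g⟩ (by simp))).elim
    · exact ⟨Quot.mk _ (a ++ (m ++ ⟨j, p * q⟩ :: (m₂ ++ ⟨i, g * h⟩ :: r))),
        .single (Merge.shorten_mk ⟨a, m, m₂ ++ ⟨i, g * h⟩ :: r, j, p, q, hm, by simp, rfl⟩),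
        .single (Amalgamate.merge ⟨a ++ m ++ ⟨j, p * q⟩ :: m₂, r, i, g, h, by simp, by simp⟩ |>
          Merge.shorten_mk)⟩
    · exact ⟨Quot.mk _ (a ++ (m₁ ++ ⟨i, g * h⟩ :: m₂ ++ ⟨j, p * q⟩ :: b)),
        .single (Merge.shorten_mk ⟨a, m₁ ++ ⟨i, g * h⟩ :: m₂, b, j, p, q,
          by simpa [or_imp, forall_and] using hm, by simp, rfl⟩),
        .single (Amalgamate.merge ⟨a ++ m₁, m₂ ++ ⟨j, p * q⟩ :: b, i, g, h, by simp, by simp⟩ |>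
          Merge.shorten_mk)⟩
  · exact ⟨Quot.mk _ (l ++ ⟨i, g * h⟩ :: (m₁ ++ (m ++ ⟨j, p * q⟩ :: b))),
      .single (Merge.shorten_mk ⟨l ++ ⟨i, g * h⟩ :: m₁, m, b, j, p, q, hm, by simp, by simp⟩),
      .single (Amalgamate.merge ⟨l, m₁ ++ (m ++ ⟨j, p * q⟩ :: b), i, g, h, by simp, by simp⟩ |>
        Merge.shorten_mk)⟩

theorem join_of_cancel_or_amalgamate (hy : Cancel M x y ∨ Amalgamate M x y)
    (hz : Shorten Γ M x z) :
    Join (ReflGen (ShuffleClass.Shorten Γ M)) (Quot.mk _ y) (Quot.mk _ z) := by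
  rcases hy, hz with ⟨hy | hy, hz | hz⟩
  · exact hy.join_cancel hz
  · exact hy.join_merge hz
  · exact symm (hz.join_merge (hy.merge (Γ := Γ)))
  · exact hy.join_merge hz

theorem ShuffleClass.shorten_join {A B C : ShuffleClass Γ M}
    (hB : ShuffleClass.Shorten Γ M A B) (hC : ShuffleClass.Shorten Γ M A C) :
    Join (ReflGen (ShuffleClass.Shorten Γ M)) B C := by
  obtain ⟨x, y, rfl, rfl, hy⟩ := hB
  obtain ⟨x', z, hxx', rfl, hz⟩ := hC
  obtain ⟨x'', hxx'', hy'⟩ : ∃ x'', ReflTransGen (Shuffle Γ M) x x'' ∧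
      (Cancel M x'' y ∨ Amalgamate M x'' y) := by
    rcases hy with hy | hy
    · exact ⟨x, .refl, .inl hy⟩
    · obtain ⟨x'', hxx'', hy'⟩ := hy.exists_amalgamate
      exact ⟨x'', hxx'', .inr hy'⟩
  obtain ⟨z', hz', hzz'⟩ :=
    hz.reflTransGen_shuffle ((Quot.mk_eq_mk_iff_reflTransGen.mp hxx'.symm).trans hxx'')
  rw [Quot.mk_eq_mk_iff_reflTransGen.mpr hzz']
  exact join_of_cancel_or_amalgamate hy' hz'

end Monoid

section Group

variable [∀ i, Group (M i)]

theorem reflTransGen_wordStep_of_shuffle (h : ReflTransGen (Shuffle Γ M) x y) :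
    ReflTransGen (WordStep Γ M) x y :=
  ReflTransGen.mono (fun _ _ h => .inr (.inr h)) _ _ h

theorem Shorten.reflTransGen_wordStep (h : Shorten Γ M x y) :
    ReflTransGen (WordStep Γ M) x y := by
  rcases h with h | h
  · exact .single (.inl h)
  · obtain ⟨x', hxx', hx'y⟩ := h.exists_amalgamate
    exact (reflTransGen_wordStep_of_shuffle hxx').tail (.inr (.inl hx'y))

theorem _root_.ReducedWord.not_shorten (hx : ReducedWord Γ M x) (B : ShuffleClass Γ M) :
    ¬ ShuffleClass.Shorten Γ M (Quot.mk _ x) B := by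
  rintro ⟨x', y, hxx', -, hy⟩
  have := hx y ((reflTransGen_wordStep_of_shuffle
    (Quot.mk_eq_mk_iff_reflTransGen.mp hxx')).trans hy.reflTransGen_wordStep)
  have := hy.length_add_one
  have := (perm_of_mk_eq hxx').length_eq
  omega

theorem _root_.WordStep.append_left (u : List (Σ i, M i)) (h : WordStep Γ M x y) :
    WordStep Γ M (u ++ x) (u ++ y) := by
  rcases h with ⟨l, r, i, rfl, rfl⟩ | ⟨l, r, i, g, h, rfl, rfl⟩ |
    ⟨l, r, i, j, g, h, hij, rfl, rfl⟩
  · exact .inl ⟨u ++ l, r, i, by simp, by simp⟩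
  · exact .inr (.inl ⟨u ++ l, r, i, g, h, by simp, by simp⟩)
  · exact .inr (.inr ⟨u ++ l, r, i, j, g, h, hij, by simp, by simp⟩)

theorem _root_.WordStep.append_right (u : List (Σ i, M i)) (h : WordStep Γ M x y) :
    WordStep Γ M (x ++ u) (y ++ u) := by
  rcases h with ⟨l, r, i, rfl, rfl⟩ | ⟨l, r, i, g, h, rfl, rfl⟩ |
    ⟨l, r, i, j, g, h, hij, rfl, rfl⟩
  · exact .inl ⟨l, r ++ u, i, by simp, by simp⟩
  · exact .inr (.inl ⟨l, r ++ u, i, g, h, by simp, by simp⟩)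
  · exact .inr (.inr ⟨l, r ++ u, i, j, g, h, hij, by simp, by simp⟩)

variable (Γ M) in
def wordCon : Con (FreeMonoid (Σ i, M i)) where
  r x y := EqvGen (WordStep Γ M) x.toList y.toList
  iseqv := EqvGen.is_equivalence _ |>.comap _
  mul' {_ x' y _} hx hy :=
    .trans _ _ _ (hx.lift' (· ++ y.toList) fun _ _ h => .rel _ _ (h.append_right _))
      (hy.lift' (x'.toList ++ ·) fun _ _ h => .rel _ _ (h.append_left _))

variable (Γ M) in
def syllableHom (i : ι) : M i →* (wordCon Γ M).Quotient where
  toFun g := (FreeMonoid.of ⟨i, g⟩ : FreeMonoid (Σ i, M i))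
  map_one' := (wordCon Γ M).eq.mpr (.rel _ _ (.inl ⟨[], [], i, rfl, rfl⟩))
  map_mul' g h :=
    (wordCon Γ M).eq.mpr (.symm _ _ (.rel _ _ (.inr (.inl ⟨[], [], i, g, h, rfl, rfl⟩))))

theorem syllableHom_commute {i j : ι} (hij : Γ.Adj i j) (g : M i) (h : M j) :
    Commute (syllableHom Γ M i g) (syllableHom Γ M j h) :=
  (wordCon Γ M).eq.mpr (.rel _ _ (.inr (.inr ⟨[], [], i, j, g, h, hij, rfl, rfl⟩)))

variable (Γ M) in
def toWordQuotient : GraphProduct Γ M →* (wordCon Γ M).Quotient :=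
  QuotientGroup.lift _ (Monoid.CoprodI.lift (syllableHom Γ M)) <|
    Subgroup.normalClosure_le_normal <| by
      rintro _ ⟨i, j, hij, g, h, rfl⟩
      rw [SetLike.mem_coe, MonoidHom.mem_ker, ← map_inv, ← map_inv]
      simp only [map_mul, Monoid.CoprodI.lift_of]
      rw [mul_assoc _ (syllableHom Γ M j h), (syllableHom_commute hij.symm h g⁻¹).eq,
        ← mul_assoc, ← map_mul, mul_inv_cancel, map_one, one_mul, ← map_mul, mul_inv_cancel,
        map_one]

theorem toWordQuotient_evalWord (w : List (Σ i, M i)) :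
    toWordQuotient Γ M (evalWord Γ M w) = (FreeMonoid.ofList w : (wordCon Γ M).Quotient) := by
  induction w with
  | nil => simp [evalWord]
  | cons s w ih =>
    simp only [evalWord, List.map_cons, List.prod_cons, map_mul] at ih ⊢
    rw [ih, FreeMonoid.ofList_cons, Con.coe_mul]
    rfl

theorem eqvGen_wordStep_of_evalWord_eq (h : evalWord Γ M x = evalWord Γ M y) :
    EqvGen (WordStep Γ M) x y := by
  have := congrArg (toWordQuotient Γ M) h
  rw [toWordQuotient_evalWord, toWordQuotient_evalWord] at this
  exact (wordCon Γ M).eq.mp this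

theorem eqvGen_shorten_of_eqvGen_wordStep (h : EqvGen (WordStep Γ M) x y) :
    EqvGen (ShuffleClass.Shorten Γ M) (Quot.mk _ x) (Quot.mk _ y) :=
  h.lift' _ fun x y h => by
    rcases h with h | h | h
    · exact .rel _ _ (Cancel.shorten_mk h)
    · exact .rel _ _ (Merge.shorten_mk (Amalgamate.merge h))
    · rw [Quot.sound h]
      exact .refl _

end Group

end GraphProduct

/-- Green's normal form, uniqueness part: any two reduced words
representing the same element of a graph product have the same length and the same
support; hence the length and support of an element are well defined. -/
theorem graph_product_reduced_words_same_length_support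
    {ι : Type*} (Γ : SimpleGraph ι) (M : ι → Type*) [∀ i, Group (M i)]
    (w₁ w₂ : List (Σ i, M i))
    (h₁ : ReducedWord Γ M w₁) (h₂ : ReducedWord Γ M w₂)
    (heq : evalWord Γ M w₁ = evalWord Γ M w₂) :
    w₁.length = w₂.length ∧ wordSupport M w₁ = wordSupport M w₂ := by
  open GraphProduct in
  have hclass : (Quot.mk _ w₁ : ShuffleClass Γ M) = Quot.mk _ w₂ :=
    eq_of_eqvGen_of_normal (fun _ _ _ => ShuffleClass.shorten_join)
      (eqvGen_shorten_of_eqvGen_wordStep (eqvGen_wordStep_of_evalWord_eq heq))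
      h₁.not_shorten h₂.not_shorten
  have hperm := perm_of_mk_eq hclass
  exact ⟨hperm.length_eq, Set.ext fun i => exists_congr fun g => hperm.mem_iff⟩
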